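/- Let p and t be sequences of distinct elements with |p| = m, and let w = t[j..j+m-1] be a window of length m. Let ℓ = lcp(PD_p, PD_w) (length of longest common prefix of the parent-distance tables) and r = lcs(RPD_p, RPD_w) (length of longest common suffix of the reverse parent-distance tables). If ℓ + r ≥ m - 1 then p matches w with at most one mismatch in the Cartesian tree sense: there exists h ∈ {1,...,m} with C(p[1..h-1]) = C(w[1..h-1]) and C(p[h+1..m]) = C(w[h+1..m]). -/

import Mathlib

/-- Binary tree shapes (Cartesian trees are determined by their shape). -/
inductive BTree : Type
  | nil : BTree
  | node : BTree → BTree → BTree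
deriving DecidableEq

namespace BTree

/-- Number of nodes. -/
def size : BTree → ℕ
  | nil => 0
  | node l r => size l + size r + 1

/-- Length of the leftmost path. -/
def LMP : BTree → ℕ
  | nil => 0
  | node l _ => LMP l + 1

/-- Length of the rightmost path. -/
def RMP : BTree → ℕ
  | nil => 0
  | node _ r => RMP r + 1

end BTree

/-- Minimum value of a list (0 for the empty list). -/
def listMin : List ℤ → ℤ
  | [] => 0
  | a :: t => t.foldl min a

/-- Index (0-based) of the minimum of a list. -/
def minIdx (l : List ℤ) : ℕ := l.idxOf (listMin l)

/-- Cartesian tree of a list, with fuel for termination. -/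
def ctreeAux : ℕ → List ℤ → BTree
  | 0, _ => .nil
  | _ + 1, [] => .nil
  | n + 1, a :: t =>
      let g := minIdx (a :: t)
      .node (ctreeAux n ((a :: t).take g)) (ctreeAux n ((a :: t).drop (g + 1)))

/-- Cartesian tree of a list: the root is the position of the minimum,
its subtrees are the Cartesian trees of the prefix and suffix around it. -/
def ctreeL (l : List ℤ) : BTree := ctreeAux l.length l

/-- The factor x[a..b] (1-based positions) of a sequence, as a list. -/
def seqList (x : ℕ → ℤ) (a b : ℕ) : List ℤ :=
  (List.range (b + 1 - a)).map (fun k => x (a + k))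

/-- Cartesian tree of the sequence x[1..m]. -/
def ctreeOf (m : ℕ) (x : ℕ → ℤ) : BTree := ctreeL (seqList x 1 m)

/-- Positions j < h (1-based) with x[j] < x[h]. -/
def PDset (x : ℕ → ℤ) (h : ℕ) : Finset ℕ :=
  (Finset.Ico 1 h).filter (fun j => x j < x h)

/-- Parent-distance table: PD_x[h] = h - max{j < h : x[j] < x[h]}, 0 if no such j. -/
def PD (x : ℕ → ℤ) (h : ℕ) : ℕ :=
  if hs : (PDset x h).Nonempty then h - (PDset x h).max' hs else 0

/-- Positions h < j ≤ m with x[j] < x[h]. -/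
def RPDset (m : ℕ) (x : ℕ → ℤ) (h : ℕ) : Finset ℕ :=
  (Finset.Ioc h m).filter (fun j => x j < x h)

/-- Reverse parent-distance table: RPD_x[h] = min{j > h : x[j] < x[h]} - h, 0 if no such j. -/
def RPD (m : ℕ) (x : ℕ → ℤ) (h : ℕ) : ℕ :=
  if hs : (RPDset m x h).Nonempty then (RPDset m x h).min' hs - h else 0

/-- Referent of h: the smallest position j > h with x[j] < x[h], or -1 if none. -/
def refD (m : ℕ) (x : ℕ → ℤ) (h : ℕ) : ℤ :=
  if hs : (RPDset m x h).Nonempty then ((RPDset m x h).min' hs : ℤ) else -1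

/-- Skipped-number table: SN_x[h] is the number of nodes on the rightmost path of the
left subtree of node h in C(x), i.e. the number of positions whose referent is h. -/
def SN (m : ℕ) (x : ℕ → ℤ) (h : ℕ) : ℕ :=
  ((Finset.Ico 1 h).filter (fun j => refD m x j = (h : ℤ))).card

/-- The swap τ(x,i): exchange the entries at positions i and i+1. -/
def swapAt (x : ℕ → ℤ) (i : ℕ) : ℕ → ℤ :=
  fun j => if j = i then x (i + 1) else if j = i + 1 then x i else x j

/-- ng(T,i): the Cartesian trees obtained from a sequence realizing T by one swap
at position i (valid positions are 1 ≤ i ≤ m-1). -/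
def ngi (m : ℕ) (T : BTree) (i : ℕ) : Set BTree :=
  { S | 1 ≤ i ∧ i + 1 ≤ m ∧ ∃ x : ℕ → ℤ, Set.InjOn x (Set.Icc 1 m) ∧
        ctreeOf m x = T ∧ S = ctreeOf m (swapAt x i) }

/-- ng(T): the swap neighbourhood of T. -/
def ng (m : ℕ) (T : BTree) : Set BTree := ⋃ i, ngi m T i

/-- Number of permutations of {1,...,n} whose Cartesian tree is A. -/
noncomputable def permCount (n : ℕ) (A : BTree) : ℕ :=
  Set.ncard { σ : Equiv.Perm (Fin n) |
    ctreeL (List.ofFn (fun k : Fin n => ((σ k : ℕ) : ℤ) + 1)) = A }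

/-- Product over all nodes t of A of the size of the subtree rooted at t. -/
def hookProd : BTree → ℕ
  | .nil => 1
  | .node l r => (BTree.node l r).size * hookProd l * hookProd r

/-!
The Cartesian tree of `x[a+1..b]` only depends on where the minima of the subintervals
`[c+1, d]` lie: the root is the position of the minimum and the two subtrees are the trees of
the pieces on either side of it. Equal parent distances on an interval force equal positions of
these minima: if `x` attains its minimum on `[c+1, d]` at `g` and `y` at some `g' > g`, then the
nearest smaller value to the left of `g'` lies inside `[c+1, g')` for `x` but not for `y`.
Reverse parent distances work the same way from the right. With `h = min (l+1) m`, the parent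
distances agree on `[1, h-1]` and the reverse parent distances on `[h+1, m]`.
-/

lemma listMin_eq_min? : ∀ {l : List ℤ}, l ≠ [] → l.min? = some (listMin l)
  | _ :: _, _ => List.min?_cons'

lemma minIdx_eq_of_forall_le {l : List ℤ} (hl : l.Nodup) {i : ℕ} (hi : i < l.length)
    (hmin : ∀ y ∈ l, l[i] ≤ y) : minIdx l = i := by
  have hmin? := listMin_eq_min? (List.ne_nil_of_mem (List.getElem_mem hi))
  have hval : listMin l = l[i] :=
    le_antisymm ((List.le_min?_iff hmin?).mp le_rfl _ (List.getElem_mem hi))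
      (hmin _ (List.min?_mem hmin?))
  rw [minIdx, hval, hl.idxOf_getElem]

lemma minIdx_lt_length {l : List ℤ} (hl : l ≠ []) : minIdx l < l.length :=
  List.idxOf_lt_length_iff.mpr (List.min?_mem (listMin_eq_min? hl))

lemma ctreeAux_eq_of_length_le :
    ∀ (n n' : ℕ) (l : List ℤ), l.length ≤ n → l.length ≤ n' →
      ctreeAux n l = ctreeAux n' l
  | 0, 0, _, _, _ => rfl
  | 0, _ + 1, [], _, _ | _ + 1, 0, [], _, _ | _ + 1, _ + 1, [], _, _ => rfl
  | n + 1, n' + 1, a :: t, hn, hn' => by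
    have hg := minIdx_lt_length (l := a :: t) (by simp)
    simp only [List.length_cons] at hg hn hn'
    rw [ctreeAux, ctreeAux, ctreeAux_eq_of_length_le n n', ctreeAux_eq_of_length_le n n'] <;>
      simp only [List.length_take, List.length_drop, List.length_cons] <;> omega
  | 0, _, _ :: _, h, _ | _, 0, _ :: _, _, h => by simp at h

lemma ctreeL_eq_node {l : List ℤ} (hl : l ≠ []) :
    ctreeL l = .node (ctreeL (l.take (minIdx l))) (ctreeL (l.drop (minIdx l + 1))) := by
  obtain ⟨a, t, rfl⟩ := List.exists_cons_of_ne_nil hl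
  have hg := minIdx_lt_length hl
  simp only [List.length_cons] at hg
  rw [ctreeL, List.length_cons, ctreeAux]
  congr 1 <;> apply ctreeAux_eq_of_length_le <;>
    simp only [List.length_take, List.length_drop, List.length_cons] <;> omega

lemma getElem_seqList (x : ℕ → ℤ) (a b : ℕ) {i : ℕ} (hi : i < (seqList x a b).length) :
    (seqList x a b)[i] = x (a + i) := by
  simp [seqList]

lemma length_seqList (x : ℕ → ℤ) (a b : ℕ) : (seqList x a b).length = b + 1 - a := by
  simp [seqList]

lemma mem_seqList {x : ℕ → ℤ} {a b : ℕ} {v : ℤ} :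
    v ∈ seqList x a b ↔ ∃ k ∈ Set.Icc a b, x k = v := by
  simp only [seqList, List.mem_map, List.mem_range, Set.mem_Icc]
  constructor
  · rintro ⟨i, hi, rfl⟩
    exact ⟨a + i, ⟨by omega, by omega⟩, rfl⟩
  · rintro ⟨k, ⟨hak, hkb⟩, rfl⟩
    exact ⟨k - a, by omega, by rw [Nat.add_sub_cancel' hak]⟩

lemma nodup_seqList {x : ℕ → ℤ} {a b : ℕ} (hx : Set.InjOn x (Set.Icc a b)) :
    (seqList x a b).Nodup := by
  refine (List.nodup_range).map_on fun i hi i' hi' h => ?_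
  rw [List.mem_range] at hi hi'
  have := hx ⟨Nat.le_add_right a i, by omega⟩ ⟨Nat.le_add_right a i', by omega⟩ h
  omega

lemma take_seqList (x : ℕ → ℤ) {a b g : ℕ} (hag : a + 1 ≤ g) (hgb : g ≤ b) :
    (seqList x (a + 1) b).take (g - (a + 1)) = seqList x (a + 1) (g - 1) := by
  apply List.ext_getElem
  · simp only [List.length_take, length_seqList]; omega
  · intro i _ _
    rw [List.getElem_take, getElem_seqList, getElem_seqList]

lemma drop_seqList (x : ℕ → ℤ) {a b g : ℕ} (hag : a ≤ g) :
    (seqList x a b).drop (g - a + 1) = seqList x (g + 1) b := by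
  apply List.ext_getElem
  · simp only [List.length_drop, length_seqList]; omega
  · intro i _ _
    rw [List.getElem_drop, getElem_seqList, getElem_seqList]
    congr 1
    omega

lemma ctreeL_seqList_eq_node {x : ℕ → ℤ} {a b g : ℕ} (hx : Set.InjOn x (Set.Icc (a + 1) b))
    (hg : g ∈ Set.Icc (a + 1) b) (hmin : IsMinOn x (Set.Icc (a + 1) b) g) :
    ctreeL (seqList x (a + 1) b) =
      .node (ctreeL (seqList x (a + 1) (g - 1))) (ctreeL (seqList x (g + 1) b)) := by
  obtain ⟨hag, hgb⟩ := id hg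
  have hi : g - (a + 1) < (seqList x (a + 1) b).length := by
    rw [length_seqList]; omega
  have hidx : minIdx (seqList x (a + 1) b) = g - (a + 1) := by
    refine minIdx_eq_of_forall_le (nodup_seqList hx) hi fun v hv => ?_
    obtain ⟨k, hk, rfl⟩ := mem_seqList.mp hv
    rw [getElem_seqList, Nat.add_sub_cancel' hag]
    exact hmin hk
  rw [ctreeL_eq_node (List.ne_nil_of_mem (List.getElem_mem hi)), hidx, take_seqList x hag hgb,
    drop_seqList x hag]

lemma exists_isMinOn_Icc {β : Type*} [LinearOrder β] (x : ℕ → β) {c d : ℕ}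
    (hcd : c ≤ d) :
    ∃ g ∈ Set.Icc c d, IsMinOn x (Set.Icc c d) g := by
  obtain ⟨g, hg, hmin⟩ := Set.exists_min_image _ x (Set.finite_Icc c d) ⟨c, le_rfl, hcd⟩
  exact ⟨g, hg, isMinOn_iff.mpr hmin⟩

theorem ctreeL_seqList_eq_of_isMinOn {x y : ℕ → ℤ} {a b : ℕ}
    (hx : Set.InjOn x (Set.Icc (a + 1) b)) (hy : Set.InjOn y (Set.Icc (a + 1) b))
    (hxy : ∀ c d g, a ≤ c → d ≤ b → g ∈ Set.Icc (c + 1) d →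
      IsMinOn x (Set.Icc (c + 1) d) g → IsMinOn y (Set.Icc (c + 1) d) g) :
    ctreeL (seqList x (a + 1) b) = ctreeL (seqList y (a + 1) b) := by
  induction hn : b - a using Nat.strong_induction_on generalizing a b with
  | _ n ih =>
  rcases le_or_gt b a with hba | hab
  · have hnil (z : ℕ → ℤ) : seqList z (a + 1) b = [] :=
      List.eq_nil_of_length_eq_zero (by rw [length_seqList]; omega)
    rw [hnil, hnil]
  obtain ⟨g, hg, hmin⟩ := exists_isMinOn_Icc x (Nat.succ_le_of_lt hab)
  rw [ctreeL_seqList_eq_node hx hg hmin,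
    ctreeL_seqList_eq_node hy hg (hxy a b g le_rfl le_rfl hg hmin)]
  obtain ⟨hag, hgb⟩ := hg
  congr 1
  · exact ih (g - 1 - a) (by omega) (hx.mono (Set.Icc_subset_Icc_right (by omega)))
      (hy.mono (Set.Icc_subset_Icc_right (by omega)))
      (fun c d g' hc hd => hxy c d g' hc (by omega)) rfl
  · exact ih (b - g) (by omega) (hx.mono (Set.Icc_subset_Icc_left (by omega)))
      (hy.mono (Set.Icc_subset_Icc_left (by omega)))
      (fun c d g' hc hd => hxy c d g' (by omega) hd) rfl

lemma lt_of_isMinOn_of_injOn {α β : Type*} [LinearOrder β] {x : α → β} {s : Set α}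
    {g k : α}
    (hx : Set.InjOn x s) (hg : g ∈ s) (hmin : IsMinOn x s g) (hk : k ∈ s) (hkg : k ≠ g) :
    x g < x k :=
  (hmin hk).lt_of_ne fun h => hkg (hx hg hk h).symm

lemma exists_lt_between_iff_PD (x : ℕ → ℤ) {c h : ℕ} (hch : c < h) :
    (∃ j, c < j ∧ j < h ∧ x j < x h) ↔ 0 < PD x h ∧ PD x h < h - c := by
  have hmem {j : ℕ} : j ∈ PDset x h ↔ 1 ≤ j ∧ j < h ∧ x j < x h := by
    simp only [PDset, Finset.mem_filter, Finset.mem_Ico, and_assoc]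
  unfold PD
  split_ifs with hs
  · obtain ⟨-, hMh, hM⟩ := hmem.mp (Finset.max'_mem _ hs)
    constructor
    · rintro ⟨j, hcj, hjh, hj⟩
      have := Finset.le_max' _ j (hmem.mpr ⟨by omega, hjh, hj⟩)
      omega
    · exact fun _ => ⟨_, by omega, hMh, hM⟩
  · simp only [lt_irrefl, false_and, iff_false, not_exists, not_and]
    exact fun j hcj hjh hj => hs ⟨j, hmem.mpr ⟨by omega, hjh, hj⟩⟩

lemma exists_lt_between_iff_RPD (x : ℕ → ℤ) {m h d : ℕ} (hdm : d ≤ m) :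
    (∃ j, h < j ∧ j ≤ d ∧ x j < x h) ↔ 0 < RPD m x h ∧ RPD m x h ≤ d - h := by
  have hmem {j : ℕ} : j ∈ RPDset m x h ↔ h < j ∧ j ≤ m ∧ x j < x h := by
    simp only [RPDset, Finset.mem_filter, Finset.mem_Ioc, and_assoc]
  unfold RPD
  split_ifs with hs
  · obtain ⟨hhM, -, hM⟩ := hmem.mp (Finset.min'_mem _ hs)
    constructor
    · rintro ⟨j, hhj, hjd, hj⟩
      have := Finset.min'_le _ j (hmem.mpr ⟨hhj, by omega, hj⟩)
      omega
    · exact fun _ => ⟨_, hhM, by omega, hM⟩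
  · simp only [lt_irrefl, false_and, iff_false, not_exists, not_and]
    exact fun j hhj hjd hj => hs ⟨j, hmem.mpr ⟨hhj, by omega, hj⟩⟩

section RangeMinima

variable {x y : ℕ → ℤ} {c d g g' : ℕ}

lemma not_lt_of_isMinOn_of_PD_eq (hx : Set.InjOn x (Set.Icc (c + 1) d))
    (hPD : ∀ h ∈ Set.Icc (c + 1) d, PD x h = PD y h)
    (hg : g ∈ Set.Icc (c + 1) d) (hmin : IsMinOn x (Set.Icc (c + 1) d) g)
    (hg' : g' ∈ Set.Icc (c + 1) d) (hmin' : IsMinOn y (Set.Icc (c + 1) d) g') :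
    ¬ g < g' := by
  intro hlt
  have hx_smaller : ∃ j, c < j ∧ j < g' ∧ x j < x g' :=
    ⟨g, hg.1, hlt, lt_of_isMinOn_of_injOn hx hg hmin hg' hlt.ne'⟩
  rw [exists_lt_between_iff_PD x (by omega : c < g'), hPD g' hg',
    ← exists_lt_between_iff_PD y (by omega : c < g')] at hx_smaller
  obtain ⟨j, hcj, hjg', hj⟩ := hx_smaller
  exact (hmin' ⟨hcj, (hjg'.trans_le hg'.2).le⟩).not_gt hj

lemma isMinOn_of_PD_eq (hx : Set.InjOn x (Set.Icc (c + 1) d))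
    (hy : Set.InjOn y (Set.Icc (c + 1) d)) (hPD : ∀ h ∈ Set.Icc (c + 1) d, PD x h = PD y h)
    (hg : g ∈ Set.Icc (c + 1) d) (hmin : IsMinOn x (Set.Icc (c + 1) d) g) :
    IsMinOn y (Set.Icc (c + 1) d) g := by
  obtain ⟨g', hg', hmin'⟩ := exists_isMinOn_Icc y (hg.1.trans hg.2)
  obtain rfl : g' = g := le_antisymm
    (not_lt.mp (not_lt_of_isMinOn_of_PD_eq hx hPD hg hmin hg' hmin'))
    (not_lt.mp (not_lt_of_isMinOn_of_PD_eq hy (fun h hh => (hPD h hh).symm) hg' hmin' hg hmin))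
  exact hmin'

lemma not_lt_of_isMinOn_of_RPD_eq {m : ℕ} (hdm : d ≤ m) (hx : Set.InjOn x (Set.Icc (c + 1) d))
    (hRPD : ∀ h ∈ Set.Icc (c + 1) d, RPD m x h = RPD m y h)
    (hg : g ∈ Set.Icc (c + 1) d) (hmin : IsMinOn x (Set.Icc (c + 1) d) g)
    (hg' : g' ∈ Set.Icc (c + 1) d) (hmin' : IsMinOn y (Set.Icc (c + 1) d) g') :
    ¬ g' < g := by
  intro hlt
  have hx_smaller : ∃ j, g' < j ∧ j ≤ d ∧ x j < x g' :=
    ⟨g, hlt, hg.2, lt_of_isMinOn_of_injOn hx hg hmin hg' hlt.ne⟩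
  rw [exists_lt_between_iff_RPD x hdm, hRPD g' hg', ← exists_lt_between_iff_RPD y hdm]
    at hx_smaller
  obtain ⟨j, hg'j, hjd, hj⟩ := hx_smaller
  exact (hmin' ⟨hg'.1.trans hg'j.le, hjd⟩).not_gt hj

lemma isMinOn_of_RPD_eq {m : ℕ} (hdm : d ≤ m) (hx : Set.InjOn x (Set.Icc (c + 1) d))
    (hy : Set.InjOn y (Set.Icc (c + 1) d))
    (hRPD : ∀ h ∈ Set.Icc (c + 1) d, RPD m x h = RPD m y h)
    (hg : g ∈ Set.Icc (c + 1) d) (hmin : IsMinOn x (Set.Icc (c + 1) d) g) :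
    IsMinOn y (Set.Icc (c + 1) d) g := by
  obtain ⟨g', hg', hmin'⟩ := exists_isMinOn_Icc y (hg.1.trans hg.2)
  obtain rfl : g' = g := le_antisymm
    (not_lt.mp (not_lt_of_isMinOn_of_RPD_eq hdm hy (fun h hh => (hRPD h hh).symm)
      hg' hmin' hg hmin))
    (not_lt.mp (not_lt_of_isMinOn_of_RPD_eq hdm hx hRPD hg hmin hg' hmin'))
  exact hmin'

end RangeMinima

section

variable {x y : ℕ → ℤ} {a b : ℕ}

theorem ctreeL_seqList_eq_of_PD_eq (hx : Set.InjOn x (Set.Icc (a + 1) b))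
    (hy : Set.InjOn y (Set.Icc (a + 1) b)) (hPD : ∀ h ∈ Set.Icc (a + 1) b, PD x h = PD y h) :
    ctreeL (seqList x (a + 1) b) = ctreeL (seqList y (a + 1) b) := by
  refine ctreeL_seqList_eq_of_isMinOn hx hy fun c d g hac hdb hg => ?_
  have hsub : Set.Icc (c + 1) d ⊆ Set.Icc (a + 1) b := Set.Icc_subset_Icc (by omega) hdb
  exact isMinOn_of_PD_eq (hx.mono hsub) (hy.mono hsub) (fun h hh => hPD h (hsub hh)) hg

theorem ctreeL_seqList_eq_of_RPD_eq {m : ℕ} (hbm : b ≤ m) (hx : Set.InjOn x (Set.Icc (a + 1) b))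
    (hy : Set.InjOn y (Set.Icc (a + 1) b))
    (hRPD : ∀ h ∈ Set.Icc (a + 1) b, RPD m x h = RPD m y h) :
    ctreeL (seqList x (a + 1) b) = ctreeL (seqList y (a + 1) b) := by
  refine ctreeL_seqList_eq_of_isMinOn hx hy fun c d g hac hdb hg => ?_
  have hsub : Set.Icc (c + 1) d ⊆ Set.Icc (a + 1) b := Set.Icc_subset_Icc (by omega) hdb
  exact isMinOn_of_RPD_eq (hdb.trans hbm) (hx.mono hsub) (hy.mono hsub)
    (fun h hh => hRPD h (hsub hh)) hg

end

theorem stmt19_general (m j : ℕ) (hm : 1 ≤ m) (p t : ℕ → ℤ)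
    (hp : Set.InjOn p (Set.Icc 1 m))
    (ht : Set.InjOn t (Set.Icc j (j + m - 1)))
    (l r : ℕ)
    (hl : ∀ h, 1 ≤ h → h ≤ l → PD p h = PD (fun k => t (j + k - 1)) h)
    (hr : ∀ h, m - r < h → h ≤ m → RPD m p h = RPD m (fun k => t (j + k - 1)) h)
    (hsum : m - 1 ≤ l + r) :
    ∃ h ∈ Finset.Icc 1 m,
      ctreeL (seqList p 1 (h - 1)) =
        ctreeL (seqList (fun k => t (j + k - 1)) 1 (h - 1)) ∧
      ctreeL (seqList p (h + 1) m) =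
        ctreeL (seqList (fun k => t (j + k - 1)) (h + 1) m) := by
  have hw : Set.InjOn (fun k => t (j + k - 1)) (Set.Icc 1 m) := by
    rintro k ⟨hk1, hkm⟩ k' ⟨hk'1, hk'm⟩ h
    have := ht (⟨by omega, by omega⟩ : j + k - 1 ∈ Set.Icc j (j + m - 1))
      ⟨by omega, by omega⟩ h
    omega
  refine ⟨min (l + 1) m, Finset.mem_Icc.mpr ⟨by omega, by omega⟩, ?_, ?_⟩
  · exact ctreeL_seqList_eq_of_PD_eq (a := 0) (hp.mono (Set.Icc_subset_Icc_right (by omega)))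
      (hw.mono (Set.Icc_subset_Icc_right (by omega))) fun h ⟨h1, hh⟩ => hl h h1 (by omega)
  · exact ctreeL_seqList_eq_of_RPD_eq le_rfl (hp.mono (Set.Icc_subset_Icc_left (by omega)))
      (hw.mono (Set.Icc_subset_Icc_left (by omega))) fun h ⟨hh, hhm⟩ => hr h (by omega) hhm

theorem stmt19 (m j : ℕ) (hj : 1 ≤ j) (hm : 1 ≤ m) (p t : ℕ → ℤ)
    (hp : Set.InjOn p (Set.Icc 1 m))
    (ht : Set.InjOn t (Set.Icc j (j + m - 1)))
    (l r : ℕ)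
    (hl : ∀ h, 1 ≤ h → h ≤ l → PD p h = PD (fun k => t (j + k - 1)) h)
    (hr : ∀ h, m - r < h → h ≤ m → RPD m p h = RPD m (fun k => t (j + k - 1)) h)
    (hsum : m - 1 ≤ l + r) :
    ∃ h ∈ Finset.Icc 1 m,
      ctreeL (seqList p 1 (h - 1)) =
        ctreeL (seqList (fun k => t (j + k - 1)) 1 (h - 1)) ∧
      ctreeL (seqList p (h + 1) m) =
        ctreeL (seqList (fun k => t (j + k - 1)) (h + 1) m) :=
  stmt19_general m j hm p t hp ht l r hl hr hsum
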